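/- arXiv:2506.19810 — 2 statements merged into one kernel-verified Lean document; each statement's English description precedes it below -/
import Mathlib

section
/- For randomized learners in ambiguous online learning, the minimax expected number of mistakes satisfies EM*_H(N) ≥ AL(H, N) / (VC(Λ(H)) + 1). -/
/-- A `Y`-lattice: a family of subsets of `Y` containing `Y` itself and closed
under binary intersections. -/
def IsYLattice {Y : Type} (L : Set (Set Y)) : Prop :=
  Set.univ ∈ L ∧ ∀ A ∈ L, ∀ B ∈ L, A ∩ B ∈ L

/-- The `Λ`-hull of `A`: the intersection of all members of `Λ` containing `A`. -/
def latHull {Y : Type} (L : Set (Set Y)) (A : Set Y) : Set Y :=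
  ⋂₀ {B | B ∈ L ∧ A ⊆ B}

/-- The `Λ`-complexity of `A`: minimal cardinality of `B ⊆ A` with `A ⊆ hull(B)`. -/
noncomputable def latComplexity {Y : Type} (L : Set (Set Y)) (A : Set Y) : ℕ :=
  sInf {n : ℕ | ∃ B : Set Y, B ⊆ A ∧ B.ncard = n ∧ A ⊆ latHull L B}

/-- The pivot dimension of `Λ`: maximal `Λ`-complexity of an element of `Λ`. -/
noncomputable def PDim {Y : Type} (L : Set (Set Y)) : ℕ :=
  sSup {n : ℕ | ∃ A ∈ L, n = latComplexity L A}

/-- `Λ` shatters `S` if every subset of `S` is a trace `S ∩ C` for some `C ∈ Λ`. -/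
def Shatters {Y : Type} (L : Set (Set Y)) (S : Set Y) : Prop :=
  ∀ B ⊆ S, ∃ C ∈ L, S ∩ C = B

/-- VC dimension of the family `Λ`. -/
noncomputable def VCdim {Y : Type} (L : Set (Set Y)) : ℕ :=
  sSup {n : ℕ | ∃ S : Set Y, Shatters L S ∧ S.ncard = n}

/-- `Λ(H)`: the minimal `Y`-lattice containing every value `h x` for `h ∈ H`. -/
def LamH {X Y : Type} (H : Set (X → Set Y)) : Set (Set Y) :=
  {A | ∀ L : Set (Set Y), IsYLattice L → (∀ h ∈ H, ∀ x : X, h x ∈ L) → A ∈ L}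

/-- A finite rooted tree: vertices, a root, and a parent map under which every
vertex reaches the root. -/
structure RTree where
  V : Type
  [fin : Fintype V]
  root : V
  parent : V → V
  parent_root : parent root = root
  reaches : ∀ v : V, ∃ k : ℕ, parent^[k] v = root

namespace RTree

/-- Children of a vertex (the root is not a child of anything). -/
def children (t : RTree) (v : t.V) : Set t.V := {w | t.parent w = v ∧ w ≠ t.root}

def IsLeaf (t : RTree) (v : t.V) : Prop := t.children v = ∅

/-- `a` is an ancestor (or equal to) `u`. -/
def Anc (t : RTree) (a u : t.V) : Prop := ∃ k : ℕ, t.parent^[k] u = a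

noncomputable def depthOf (t : RTree) (v : t.V) : ℕ := sInf {k : ℕ | t.parent^[k] v = t.root}

noncomputable def depth (t : RTree) : ℕ := sSup {n : ℕ | ∃ v : t.V, n = t.depthOf v}

end RTree

/-- An ambiguous shattered `H`-tree: internal vertices carry instances, non-root
vertices (identified with the edges to their parents) carry labels, distinct among
siblings, leaves carry hypotheses from `H` compatible with all edge labels above
them, and `E0` selects exactly one child edge of each internal vertex. -/
structure AmbTree (X Y : Type) (H : Set (X → Set Y)) where
  t : RTree
  xlab : t.V → X
  ylab : t.V → Y
  hlab : t.V → (X → Set Y)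
  E0 : Set t.V
  e0_ne_root : ∀ a ∈ E0, a ≠ t.root
  e0_unique : ∀ v : t.V, (t.children v).Nonempty → ∃! a : t.V, a ∈ t.children v ∩ E0
  sib_distinct : ∀ a b : t.V, a ≠ t.root → b ≠ t.root →
    t.parent a = t.parent b → a ≠ b → ylab a ≠ ylab b
  hlab_mem : ∀ u : t.V, t.IsLeaf u → hlab u ∈ H
  path_mem : ∀ u a : t.V, t.IsLeaf u → t.Anc a u → a ≠ t.root →
    ylab a ∈ hlab u (xlab (t.parent a))

namespace AmbTree

variable {X Y : Type} {H : Set (X → Set Y)}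

/-- Edge `a` (on the root-to-`u` path) is relevant to leaf `u`. -/
def Relevant (T : AmbTree X Y H) (a u : T.t.V) : Prop :=
  a ≠ T.t.root ∧ T.t.Anc a u ∧
    (a ∉ T.E0 ∨ ∃ b : T.t.V, T.t.parent b = T.t.parent a ∧ b ≠ T.t.root ∧
      T.ylab b ∉ T.hlab u (T.xlab (T.t.parent a)))

noncomputable def relCount (T : AmbTree X Y H) (u : T.t.V) : ℕ :=
  {a : T.t.V | T.Relevant a u}.ncard

/-- Rank: the minimum over leaves of the number of relevant edges. -/
noncomputable def rank (T : AmbTree X Y H) : ℕ :=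
  sInf {n : ℕ | ∃ u : T.t.V, T.t.IsLeaf u ∧ n = T.relCount u}

noncomputable def depth (T : AmbTree X Y H) : ℕ := T.t.depth

end AmbTree

/-- `AL(H, N)`: the maximal rank of an ambiguous shattered `H`-tree of depth at most `N`. -/
noncomputable def ALn (X Y : Type) (H : Set (X → Set Y)) (N : ℕ) : ℕ :=
  sSup {r : ℕ | ∃ T : AmbTree X Y H, T.depth ≤ N ∧ r = T.rank}

/-- A trace is compatible with `h` when every observed label is allowed by `h`. -/
def Compatible {X Y : Type} (h : X → Set Y) (xs : List (X × Y)) : Prop :=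
  ∀ p ∈ xs, p.2 ∈ h p.1

/-- Number of mistakes (overconfidence or underconfidence) of learner `A` on a
trace, relative to hypothesis `h`. -/
noncomputable def numMistakes {X Y : Type} (A : List (X × Y) → X → Set Y)
    (h : X → Set Y) (xs : List (X × Y)) : ℕ :=
  {k : ℕ | ∃ hk : k < xs.length,
    (xs.get ⟨k, hk⟩).2 ∉ A (xs.take k) (xs.get ⟨k, hk⟩).1 ∨
      ¬ A (xs.take k) (xs.get ⟨k, hk⟩).1 ⊆ h (xs.get ⟨k, hk⟩).1}.ncard

/-- The minimax mistake bound for deterministic learners over traces of length `N`. -/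
noncomputable def Mstar {X Y : Type} (H : Set (X → Set Y)) (N : ℕ) : ℕ :=
  sInf {m : ℕ | ∃ A : List (X × Y) → X → Set Y, ∀ h ∈ H, ∀ xs : List (X × Y),
    Compatible h xs → xs.length = N → numMistakes A h xs ≤ m}

/-- Expected number of mistakes of a randomized learner `R` on trace `xs` relative
to hypothesis `h`: the sum over rounds of the probability of a mistake. -/
noncomputable def expMistakes {X Y : Type} (R : List (X × Y) → X → PMF (Set Y))
    (h : X → Set Y) (xs : List (X × Y)) : ℝ :=
  ∑ k : Fin xs.length,
    ((R (xs.take k.1) (xs.get k).1).toOuterMeasure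
      {α : Set Y | (xs.get k).2 ∉ α ∨ ¬ α ⊆ h (xs.get k).1}).toReal


/-!
Walk down an ambiguous shattered tree of maximal rank, choosing each child against the
learner's current distribution `p` over predicted sets. At an internal vertex with instance
`x`, let `P` be the labels of the children outside `E0`, and `B ⊆ P` a minimal set whose
`Λ(H)`-hull contains `P`: minimality makes `B` shattered, so `|B| ≤ d = VC(Λ(H))`. If the
learner omits some `y ∈ B` with probability at least `1 / (d + 1)`, the walk takes the child
labelled `y`. Otherwise it takes the `E0` child, which is relevant to the final leaf
hypothesis `h` only if some sibling label lies outside `h x ∈ Λ(H)`; then some `y ∈ B` lies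
outside `h x` as well, and the learner predicts a set containing it, hence not contained in
`h x`, with probability above `d / (d + 1) ≥ 1 / (d + 1)`. So every relevant edge on the
path costs at least `1 / (d + 1)` expected mistakes.
-/

attribute [instance] RTree.fin

namespace RTree

variable {t : RTree}

theorem iterate_parent_root (t : RTree) (k : ℕ) : t.parent^[k] t.root = t.root :=
  Function.iterate_fixed t.parent_root k

theorem iterate_parent_eq_root_of_le {v : t.V} {k m : ℕ} (hk : t.parent^[k] v = t.root)
    (hkm : k ≤ m) : t.parent^[m] v = t.root := by
  rw [← Nat.sub_add_cancel hkm, Function.iterate_add_apply, hk, iterate_parent_root]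

theorem Anc.refl (a : t.V) : t.Anc a a := ⟨0, rfl⟩

theorem Anc.parent {c u : t.V} (h : t.Anc c u) : t.Anc (t.parent c) u := by
  obtain ⟨k, rfl⟩ := h
  exact ⟨k + 1, Function.iterate_succ_apply' _ _ _⟩

theorem Anc.antisymm {a b : t.V} (hab : t.Anc a b) (hba : t.Anc b a) : a = b := by
  obtain ⟨i, rfl⟩ := hab
  obtain ⟨j, hj⟩ := hba
  rcases Nat.eq_zero_or_pos (i + j) with hij | hij
  · obtain rfl : i = 0 := by omega
    rfl
  -- a point on a cycle of `parent` is fixed by its iterates, yet they all end at the root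
  have hper : Function.IsPeriodicPt t.parent (i + j) (t.parent^[i] b) := by
    rw [Function.IsPeriodicPt, Function.IsFixedPt, Function.iterate_add_apply, hj]
  obtain ⟨k, hk⟩ := t.reaches (t.parent^[i] b)
  have ha : t.parent^[i] b = t.root :=
    (hper.mul_const k).eq.symm.trans
      (iterate_parent_eq_root_of_le hk (Nat.le_mul_of_pos_left k hij))
  have hb : b = t.root := by rw [← hj, ha, iterate_parent_root]
  rw [ha, hb]

theorem Anc.total {a b u : t.V} (ha : t.Anc a u) (hb : t.Anc b u) : t.Anc a b ∨ t.Anc b a := by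
  obtain ⟨i, rfl⟩ := ha
  obtain ⟨j, rfl⟩ := hb
  rcases le_total i j with hij | hij
  · exact Or.inr ⟨j - i, by rw [← Function.iterate_add_apply, Nat.sub_add_cancel hij]⟩
  · exact Or.inl ⟨i - j, by rw [← Function.iterate_add_apply, Nat.sub_add_cancel hij]⟩

theorem iterate_parent_depthOf (t : RTree) (v : t.V) : t.parent^[t.depthOf v] v = t.root :=
  Nat.sInf_mem (t.reaches v)

theorem depthOf_root (t : RTree) : t.depthOf t.root = 0 :=
  Nat.sInf_eq_zero.2 (Or.inl rfl)

theorem depthOf_le_depth (t : RTree) (v : t.V) : t.depthOf v ≤ t.depth := by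
  refine le_csSup ?_ ⟨v, rfl⟩
  exact BddAbove.mono (by rintro _ ⟨w, rfl⟩; exact ⟨w, rfl⟩)
    (Set.finite_range t.depthOf).bddAbove

theorem depthOf_of_mem_children {c v : t.V} (hc : c ∈ t.children v) :
    t.depthOf c = t.depthOf v + 1 := by
  apply le_antisymm
  · refine Nat.sInf_le (?_ : t.parent^[t.depthOf v + 1] c = t.root)
    rw [Function.iterate_succ_apply, hc.1, iterate_parent_depthOf]
  · have hc0 : t.depthOf c ≠ 0 := fun h0 => hc.2 (by simpa [h0] using t.iterate_parent_depthOf c)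
    obtain ⟨n, hn⟩ := Nat.exists_eq_succ_of_ne_zero hc0
    have hv : t.parent^[n] v = t.root := by
      rw [← hc.1, ← Function.iterate_succ_apply, ← hn, iterate_parent_depthOf]
    have : t.depthOf v ≤ n := Nat.sInf_le hv
    omega

theorem exists_isLeaf (t : RTree) : ∃ v : t.V, t.IsLeaf v := by
  obtain ⟨v, -, hv⟩ :=
    Finset.exists_max_image Finset.univ t.depthOf ⟨t.root, Finset.mem_univ _⟩
  refine ⟨v, Set.eq_empty_of_forall_notMem fun w hw => ?_⟩
  have := hv w (Finset.mem_univ w)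
  rw [depthOf_of_mem_children hw] at this
  omega

end RTree

section Lattice

variable {Y : Type} {L : Set (Set Y)}

theorem subset_latHull (L : Set (Set Y)) (B : Set Y) : B ⊆ latHull L B :=
  Set.subset_sInter fun _ hC => hC.2

theorem latHull_subset {B C : Set Y} (hC : C ∈ L) (hBC : B ⊆ C) : latHull L B ⊆ C :=
  Set.sInter_subset_of_mem ⟨hC, hBC⟩

theorem latHull_mono {A B : Set Y} (h : A ⊆ B) : latHull L A ⊆ latHull L B :=
  Set.sInter_subset_sInter fun _ hC => ⟨hC.1, h.trans hC.2⟩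

theorem Shatters.ncard_le_VCdim [Finite Y] {S : Set Y} (h : Shatters L S) :
    S.ncard ≤ VCdim L :=
  le_csSup ⟨Nat.card Y, by rintro _ ⟨S, -, rfl⟩; exact Set.ncard_le_card S⟩ ⟨S, h, rfl⟩

namespace IsYLattice

variable [Finite Y] (hL : IsYLattice L)
include hL

theorem sInter_mem {S : Set (Set Y)} (hS : S ⊆ L) : ⋂₀ S ∈ L := by
  induction S, Set.toFinite S using Set.Finite.induction_on with
  | empty => simpa using hL.1
  | @insert a S _ _ ih =>
    rw [Set.sInter_insert]
    exact hL.2 a (hS (Set.mem_insert a S)) _ (ih ((Set.subset_insert a S).trans hS))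

theorem latHull_mem (B : Set Y) : latHull L B ∈ L :=
  hL.sInter_mem fun _ hC => hC.1

theorem shatters_of_forall_not_subset_latHull_diff {B : Set Y}
    (hB : ∀ b ∈ B, ¬ B ⊆ latHull L (B \ {b})) : Shatters L B := by
  intro B' hB'
  refine ⟨latHull L B', hL.latHull_mem B',
    subset_antisymm ?_ fun b hb => ⟨hB' hb, subset_latHull L B' hb⟩⟩
  rintro b ⟨hbB, hbB'⟩
  by_contra hb
  refine hB b hbB fun c hc => ?_
  by_cases hcb : c = b
  · rw [hcb]
    exact latHull_mono (show B' ⊆ B \ {b} from fun a ha => ⟨hB' ha, fun h => hb (h ▸ ha)⟩)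
      hbB'
  · exact subset_latHull L _ ⟨hc, hcb⟩

theorem exists_subset_latHull_ncard_le_VCdim (P : Set Y) :
    ∃ B ⊆ P, P ⊆ latHull L B ∧ B.ncard ≤ VCdim L := by
  obtain ⟨B, ⟨hBP, hPB⟩, hmin⟩ :=
    Set.exists_min_image {B : Set Y | B ⊆ P ∧ P ⊆ latHull L B} Set.ncard (Set.toFinite _)
      ⟨P, subset_rfl, subset_latHull L P⟩
  refine ⟨B, hBP, hPB,
    (hL.shatters_of_forall_not_subset_latHull_diff fun b hb hBb => ?_).ncard_le_VCdim⟩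
  have := hmin (B \ {b})
    ⟨Set.sdiff_subset.trans hBP, hPB.trans (latHull_subset (hL.latHull_mem _) hBb)⟩
  exact (Set.ncard_sdiff_singleton_lt_of_mem hb).not_ge this

end IsYLattice

end Lattice

theorem isYLattice_LamH {X Y : Type} (H : Set (X → Set Y)) : IsYLattice (LamH H) :=
  ⟨fun _ hL _ => hL.1, fun _ hA _ hB L hL hv => hL.2 _ (hA L hL hv) _ (hB L hL hv)⟩

theorem apply_mem_LamH {X Y : Type} {H : Set (X → Set Y)} {h : X → Set Y} (hh : h ∈ H)
    (x : X) : h x ∈ LamH H :=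
  fun _ _ hv => hv h hh x

namespace PMF

variable {α : Type*} (p : PMF α)

theorem toOuterMeasure_ne_top (s : Set α) : p.toOuterMeasure s ≠ ⊤ :=
  ne_top_of_le_ne_top ENNReal.one_ne_top <| (p.toOuterMeasure.mono (Set.subset_univ s)).trans_eq
    ((p.toOuterMeasure_apply_eq_one_iff _).2 (Set.subset_univ _))

theorem toReal_toOuterMeasure_mono {s t : Set α} (h : s ⊆ t) :
    (p.toOuterMeasure s).toReal ≤ (p.toOuterMeasure t).toReal :=
  ENNReal.toReal_mono (p.toOuterMeasure_ne_top t) (p.toOuterMeasure.mono h)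

theorem toReal_toOuterMeasure_add_compl (s : Set α) :
    (p.toOuterMeasure s).toReal + (p.toOuterMeasure sᶜ).toReal = 1 := by
  rw [← ENNReal.toReal_add (p.toOuterMeasure_ne_top s) (p.toOuterMeasure_ne_top sᶜ),
    toOuterMeasure_apply, toOuterMeasure_apply, ← ENNReal.tsum_add]
  simp only [Set.indicator_self_add_compl_apply, p.tsum_coe, ENNReal.toReal_one]

end PMF

theorem IsYLattice.exists_prob_notMem_or_forall_prob_not_subset {Y : Type} [Finite Y]
    {L : Set (Set Y)} (hL : IsYLattice L) (p : PMF (Set Y)) (P : Set Y) :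
    (∃ y ∈ P, 1 ≤ (VCdim L + 1 : ℝ) * (p.toOuterMeasure {α | y ∉ α}).toReal) ∨
      ∀ F ∈ L, ¬ P ⊆ F →
        1 ≤ (VCdim L + 1 : ℝ) * (p.toOuterMeasure {α | ¬ α ⊆ F}).toReal := by
  obtain ⟨B, hBP, hPB, hBd⟩ := hL.exists_subset_latHull_ncard_le_VCdim P
  by_cases hB : ∃ y ∈ B, 1 ≤ (VCdim L + 1 : ℝ) * (p.toOuterMeasure {α | y ∉ α}).toReal
  · obtain ⟨y, hy, hy'⟩ := hB
    exact Or.inl ⟨y, hBP hy, hy'⟩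
  push Not at hB
  refine Or.inr fun F hF hPF => ?_
  obtain ⟨y, hyB, hyF⟩ : ∃ y ∈ B, y ∉ F :=
    Set.not_subset.1 fun hBF => hPF (hPB.trans (latHull_subset hF hBF))
  have hd : (1 : ℝ) ≤ VCdim L := by
    exact_mod_cast ((Set.ncard_pos (Set.toFinite B)).2 ⟨y, hyB⟩).trans_le hBd
  have hmono := p.toReal_toOuterMeasure_mono (s := {α | y ∈ α}) (t := {α | ¬ α ⊆ F})
    fun α hy hαF => hyF (hαF hy)
  have hcompl := p.toReal_toOuterMeasure_add_compl {α | y ∈ α}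
  rw [Set.compl_ofPred] at hcompl
  nlinarith [hB y hyB]

namespace AmbTree

variable {X Y : Type} {H : Set (X → Set Y)} (T : AmbTree X Y H)

def relevantBelow (v u : T.t.V) : Set T.t.V :=
  {a | T.Relevant a u ∧ T.t.Anc v a ∧ a ≠ v}

theorem relevantBelow_self (u : T.t.V) : T.relevantBelow u u = ∅ :=
  Set.eq_empty_of_forall_notMem fun _ ha => ha.2.2 (ha.1.2.1.antisymm ha.2.1)

theorem relevantBelow_root (u : T.t.V) : T.relevantBelow T.t.root u = {a | T.Relevant a u} :=
  Set.ext fun a => ⟨fun h => h.1, fun h => ⟨h, T.t.reaches a, h.1⟩⟩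

theorem relevantBelow_subset_insert {v c u : T.t.V} (hc : c ∈ T.t.children v)
    (hcu : T.t.Anc c u) : T.relevantBelow v u ⊆ insert c (T.relevantBelow c u) := by
  rintro a ⟨hrel, hva, hav⟩
  by_cases hac : a = c
  · exact Or.inl hac
  refine Or.inr ⟨hrel, (hrel.2.1.total hcu).resolve_left ?_, hac⟩
  rintro ⟨_ | k, hk⟩
  · exact hac hk.symm
  · rw [Function.iterate_succ_apply, hc.1] at hk
    exact hav (RTree.Anc.antisymm ⟨k, hk⟩ hva)

open Classical in
theorem ncard_relevantBelow_le {v c u : T.t.V} (hc : c ∈ T.t.children v) (hcu : T.t.Anc c u) :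
    (T.relevantBelow v u).ncard ≤
      (T.relevantBelow c u).ncard + if T.Relevant c u then 1 else 0 := by
  have hsub := T.relevantBelow_subset_insert hc hcu
  split_ifs with hrel
  · exact (Set.ncard_le_ncard hsub).trans (Set.ncard_insert_le c _)
  · refine Set.ncard_le_ncard fun a ha => (hsub ha).resolve_left ?_
    rintro rfl
    exact hrel ha.1

theorem relCount_le_depthOf (u : T.t.V) : T.relCount u ≤ T.t.depthOf u := by
  have hsub :
      {a | T.Relevant a u} ⊆ Set.range fun k : Fin (T.t.depthOf u) => T.t.parent^[k] u := by
    rintro a ⟨har, ⟨k, rfl⟩, -⟩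
    exact ⟨⟨k, lt_of_not_ge fun hk =>
      har (RTree.iterate_parent_eq_root_of_le (T.t.iterate_parent_depthOf u) hk)⟩, rfl⟩
  calc T.relCount u ≤ (Set.range fun k : Fin (T.t.depthOf u) => T.t.parent^[k] u).ncard :=
        Set.ncard_le_ncard hsub
    _ ≤ (Set.univ : Set (Fin (T.t.depthOf u))).ncard := by
        rw [← Set.image_univ]; exact Set.ncard_image_le
    _ = T.t.depthOf u := by simp

theorem rank_le_relCount {u : T.t.V} (hu : T.t.IsLeaf u) : T.rank ≤ T.relCount u :=
  Nat.sInf_le ⟨u, hu, rfl⟩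

theorem rank_le_depth : T.rank ≤ T.depth :=
  let ⟨u, hu⟩ := T.t.exists_isLeaf
  (T.rank_le_relCount hu).trans ((T.relCount_le_depthOf u).trans (T.t.depthOf_le_depth u))

end AmbTree

section ExpectedMistakes

variable {X Y : Type} (R : List (X × Y) → X → PMF (Set Y)) (h : X → Set Y)

noncomputable def expMistakesFrom : List (X × Y) → List (X × Y) → ℝ
  | _, [] => 0
  | pre, q :: ys => ((R pre q.1).toOuterMeasure {α | q.2 ∉ α ∨ ¬ α ⊆ h q.1}).toReal +
      expMistakesFrom (pre ++ [q]) ys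

theorem expMistakesFrom_nonneg (pre ys : List (X × Y)) : 0 ≤ expMistakesFrom R h pre ys := by
  induction ys generalizing pre with
  | nil => exact le_rfl
  | cons q ys ih => exact add_nonneg ENNReal.toReal_nonneg (ih _)

theorem expMistakesFrom_append (pre ys zs : List (X × Y)) :
    expMistakesFrom R h pre (ys ++ zs) =
      expMistakesFrom R h pre ys + expMistakesFrom R h (pre ++ ys) zs := by
  induction ys generalizing pre with
  | nil => simp [expMistakesFrom]
  | cons q ys ih => simp [expMistakesFrom, ih, add_assoc]

theorem sum_eq_expMistakesFrom (pre ys : List (X × Y)) :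
    ∑ k : Fin ys.length, ((R (pre ++ ys.take k) (ys.get k).1).toOuterMeasure
      {α | (ys.get k).2 ∉ α ∨ ¬ α ⊆ h (ys.get k).1}).toReal =
      expMistakesFrom R h pre ys := by
  induction ys generalizing pre with
  | nil => simp [expMistakesFrom]
  | cons q ys ih =>
    rw [expMistakesFrom, ← ih]
    erw [Fin.sum_univ_succ]
    simp [List.append_assoc]

theorem expMistakes_eq_expMistakesFrom (xs : List (X × Y)) :
    expMistakes R h xs = expMistakesFrom R h [] xs := by
  rw [expMistakes, ← sum_eq_expMistakesFrom]
  simp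

theorem exists_compatible_expMistakesFrom_le {h : X → Set Y} (hh : ∃ x, (h x).Nonempty)
    {ys : List (X × Y)} (hys : Compatible h ys) {N : ℕ} (hN : ys.length ≤ N) :
    ∃ xs, Compatible h xs ∧ xs.length = N ∧
      expMistakesFrom R h [] ys ≤ expMistakes R h xs := by
  obtain ⟨x, y, hy⟩ := hh
  refine ⟨ys ++ List.replicate (N - ys.length) (x, y), fun q hq => ?_, by simp; omega, ?_⟩
  · rcases List.mem_append.1 hq with hq | hq
    · exact hys q hq
    · exact List.eq_of_mem_replicate hq ▸ hy
  · rw [expMistakes_eq_expMistakesFrom, expMistakesFrom_append]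
    exact le_add_of_nonneg_right (expMistakesFrom_nonneg R h _ _)

end ExpectedMistakes

namespace AmbTree

variable {X Y : Type} [Finite Y] {H : Set (X → Set Y)} (T : AmbTree X Y H)

theorem exists_mem_children_forall_relevant {v : T.t.V} (hv : (T.t.children v).Nonempty)
    (p : PMF (Set Y)) :
    ∃ c ∈ T.t.children v, ∀ u, T.t.IsLeaf u → T.t.Anc c u → T.Relevant c u →
      1 ≤ (VCdim (LamH H) + 1 : ℝ) *
        (p.toOuterMeasure {α | T.ylab c ∉ α ∨ ¬ α ⊆ T.hlab u (T.xlab v)}).toReal := by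
  obtain ⟨a, ⟨hav, haE⟩, -⟩ := T.e0_unique v hv
  rcases (isYLattice_LamH H).exists_prob_notMem_or_forall_prob_not_subset p
    (T.ylab '' (T.t.children v \ {a})) with ⟨-, ⟨b, hb, rfl⟩, hy⟩ | hF
  · refine ⟨b, hb.1, fun u _ _ _ => hy.trans ?_⟩
    exact mul_le_mul_of_nonneg_left (p.toReal_toOuterMeasure_mono fun α h => Or.inl h)
      (by positivity)
  refine ⟨a, hav, fun u hu hau hrel =>
    (hF _ (apply_mem_LamH (T.hlab_mem u hu) (T.xlab v)) ?_).trans ?_⟩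
  · rcases hrel.2.2 with h | ⟨b, hba, hbr, hbu⟩
    · exact absurd haE h
    rw [hav.1] at hba hbu
    have hb : b ≠ a := by
      rintro rfl
      exact hbu (hav.1 ▸ T.path_mem u b hu hau hbr)
    exact fun hsub => hbu (hsub ⟨b, ⟨⟨hba, hbr⟩, hb⟩, rfl⟩)
  · exact mul_le_mul_of_nonneg_left (p.toReal_toOuterMeasure_mono fun α h => Or.inr h)
      (by positivity)

theorem exists_isLeaf_compatible_ncard_relevantBelow_le (R : List (X × Y) → X → PMF (Set Y))
    (v : T.t.V) (pre : List (X × Y)) :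
    ∃ u ys, T.t.IsLeaf u ∧ T.t.Anc v u ∧ T.t.depthOf v + ys.length ≤ T.t.depth ∧
      Compatible (T.hlab u) ys ∧
      ((T.relevantBelow v u).ncard : ℝ) ≤
        (VCdim (LamH H) + 1) * expMistakesFrom R (T.hlab u) pre ys := by
  by_cases hv : T.t.IsLeaf v
  · exact ⟨v, [], hv, .refl v, by simpa using T.t.depthOf_le_depth v, by simp [Compatible],
      by simp [relevantBelow_self, expMistakesFrom]⟩
  obtain ⟨c, hc, hcost⟩ :=
    T.exists_mem_children_forall_relevant (Set.nonempty_iff_ne_empty.2 hv) (R pre (T.xlab v))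
  have hdc := T.t.depthOf_of_mem_children hc
  obtain ⟨u, ys, hu, hcu, hlen, hys, hbound⟩ :=
    exists_isLeaf_compatible_ncard_relevantBelow_le R c (pre ++ [(T.xlab v, T.ylab c)])
  refine ⟨u, (T.xlab v, T.ylab c) :: ys, hu, hc.1 ▸ hcu.parent, by simp; omega,
    List.forall_mem_cons.2 ⟨hc.1 ▸ T.path_mem u c hu hcu hc.2, hys⟩, ?_⟩
  classical
  calc ((T.relevantBelow v u).ncard : ℝ)
      ≤ (T.relevantBelow c u).ncard + if T.Relevant c u then 1 else 0 := by
        exact_mod_cast T.ncard_relevantBelow_le hc hcu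
    _ ≤ (VCdim (LamH H) + 1) * expMistakesFrom R (T.hlab u) (pre ++ [(T.xlab v, T.ylab c)]) ys +
        (VCdim (LamH H) + 1) * ((R pre (T.xlab v)).toOuterMeasure
          {α | T.ylab c ∉ α ∨ ¬ α ⊆ T.hlab u (T.xlab v)}).toReal := by
        gcongr
        split_ifs with hrel
        · exact hcost u hu hcu hrel
        · positivity
    _ = _ := by rw [expMistakesFrom]; ring
termination_by T.t.depth - T.t.depthOf v
decreasing_by have := T.t.depthOf_le_depth c; omega

theorem exists_compatible_rank_le {N : ℕ} (hT : T.depth ≤ N)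
    (hval : ∀ h ∈ H, ∃ x, (h x).Nonempty) (R : List (X × Y) → X → PMF (Set Y)) :
    ∃ h ∈ H, ∃ xs, Compatible h xs ∧ xs.length = N ∧
      (T.rank : ℝ) ≤ (VCdim (LamH H) + 1) * expMistakes R h xs := by
  obtain ⟨u, ys, hu, -, hlen, hys, hbound⟩ :=
    T.exists_isLeaf_compatible_ncard_relevantBelow_le R T.t.root []
  have hN : ys.length ≤ N := by
    have : T.t.depth ≤ N := hT
    rw [T.t.depthOf_root] at hlen
    omega
  obtain ⟨xs, hxs, hxsN, hle⟩ :=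
    exists_compatible_expMistakesFrom_le R (hval _ (T.hlab_mem u hu)) hys hN
  refine ⟨T.hlab u, T.hlab_mem u hu, xs, hxs, hxsN, ?_⟩
  rw [relevantBelow_root] at hbound
  calc (T.rank : ℝ) ≤ T.relCount u := by exact_mod_cast T.rank_le_relCount hu
    _ ≤ _ := hbound
    _ ≤ _ := by gcongr

end AmbTree

theorem ALn_eq_zero_or_exists_eq_rank (X Y : Type) (H : Set (X → Set Y)) (N : ℕ) :
    ALn X Y H N = 0 ∨ ∃ T : AmbTree X Y H, T.depth ≤ N ∧ ALn X Y H N = T.rank := by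
  rcases Set.eq_empty_or_nonempty {r | ∃ T : AmbTree X Y H, T.depth ≤ N ∧ r = T.rank}
    with h | h
  · left
    simp [ALn, h]
  · right
    exact Nat.sSup_mem h ⟨N, by rintro _ ⟨T, hT, rfl⟩; exact T.rank_le_depth.trans hT⟩

/-- the minimax expected number of mistakes of randomized learners is
at least `AL(H, N) / (VC(Λ(H)) + 1)`: every randomized learner suffers at least this
expected number of mistakes on some hypothesis and compatible length-`N` trace. -/
theorem randomized_lower_bound {X Y : Type} [Fintype Y] (H : Set (X → Set Y))
    (hne : H.Nonempty) (hval : ∀ h ∈ H, ∃ x : X, (h x).Nonempty) (N : ℕ)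
    (R : List (X × Y) → X → PMF (Set Y)) :
    ∃ h ∈ H, ∃ xs : List (X × Y), Compatible h xs ∧ xs.length = N ∧
      (ALn X Y H N : ℝ) / ((VCdim (LamH H) : ℝ) + 1) ≤ expMistakes R h xs := by
  rcases ALn_eq_zero_or_exists_eq_rank X Y H N with hzero | ⟨T, hTN, hrank⟩
  · obtain ⟨h, hh⟩ := hne
    obtain ⟨xs, hxs, hlen, -⟩ := exists_compatible_expMistakesFrom_le R (hval h hh)
      (ys := []) (by simp [Compatible]) (Nat.zero_le N)
    refine ⟨h, hh, xs, hxs, hlen, ?_⟩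
    rw [hzero, Nat.cast_zero, zero_div, expMistakes_eq_expMistakesFrom]
    exact expMistakesFrom_nonneg R h [] xs
  · obtain ⟨h, hh, xs, hxs, hlen, hle⟩ := T.exists_compatible_rank_le hTN hval R
    refine ⟨h, hh, xs, hxs, hlen, ?_⟩
    rw [hrank, div_le_iff₀ (by positivity), mul_comm]
    exact hle
end

section
/- Reduction lemma from apple tasting to ambiguous online learning: for any apple tasting hypothesis h : X → {0,1}, any horizon N, and any ambiguous learner A : (X×{0,1})* × X → 2^{{0,1}}, the apple tasting learner A^ap defined by A^ap(trace, x) := 1 iff 0 ∉ A(trace, x) satisfies PM^{A^ap}_h(N) ≤ M^A_{h^am}(N), where h^am(x) := {h(x)} ∪ {1}. -/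
/-- An apple-tasting interaction sequence consistent with hypothesis `h` and
learner `A'`: when the learner predicts `0` (false) the feedback is `1` (true),
and when it predicts `1` the feedback is the true label `h x`. -/
def AppleCompatible {X : Type} (A' : List (X × Bool) → X → Bool) (h : X → Bool)
    (xs : List (X × Bool)) : Prop :=
  ∀ k : Fin xs.length,
    (xs.get k).2 = (if A' (xs.take k.1) (xs.get k).1 then h (xs.get k).1 else true)

/-- Number of apple-tasting mistakes: rounds where the prediction differs from the
true label. -/
noncomputable def apMistakes {X : Type} (A' : List (X × Bool) → X → Bool)
    (h : X → Bool) (xs : List (X × Bool)) : ℕ :=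
  {k : ℕ | ∃ hk : k < xs.length,
    A' (xs.take k) (xs.get ⟨k, hk⟩).1 ≠ h (xs.get ⟨k, hk⟩).1}.ncard

/-- The ambiguous hypothesis `h^am` associated with an apple-tasting hypothesis:
`h^am(x) = {h(x)} ∪ {1}`. -/
def ham {X : Type} (h : X → Bool) : X → Set Bool := fun x => {h x, true}

open Classical

/-- The apple-tasting learner induced by an ambiguous learner:
predict `1` iff `0 ∉ A(trace, x)`. -/
noncomputable def aap {X : Type} (A : List (X × Bool) → X → Set Bool) :
    List (X × Bool) → X → Bool := fun hist x =>
  if false ∈ A hist x then false else true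

lemma AppleCompatible.compatible_ham {X : Type} {A' : List (X × Bool) → X → Bool}
    {h : X → Bool} {xs : List (X × Bool)} (hxs : AppleCompatible A' h xs) :
    Compatible (ham h) xs := by
  intro p hp
  obtain ⟨k, rfl⟩ := List.mem_iff_get.mp hp
  rw [hxs k]
  split <;> simp [ham]

/-- When `A^ap` errs, the feedback it receives witnesses a mistake of `A`: predicting `0`
wrongly means `h x = 1` while `0 ∈ A`, so `A ⊄ h^am x`; predicting `1` wrongly means the
revealed label `0` is missing from `A`. -/
lemma aap_ne_imp_mistake {X : Type} (A : List (X × Bool) → X → Set Bool) (h : X → Bool)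
    (hist : List (X × Bool)) (x : X) (hne : aap A hist x ≠ h x) :
    (if aap A hist x then h x else true) ∉ A hist x ∨ ¬ A hist x ⊆ ham h x := by
  unfold aap at *
  by_cases hf : false ∈ A hist x <;> cases hx : h x <;> simp_all [ham, Set.subset_def]

lemma numMistakes_set_finite {X Y : Type} (A : List (X × Y) → X → Set Y)
    (h : X → Set Y) (xs : List (X × Y)) :
    {k : ℕ | ∃ hk : k < xs.length,
      (xs.get ⟨k, hk⟩).2 ∉ A (xs.take k) (xs.get ⟨k, hk⟩).1 ∨
        ¬ A (xs.take k) (xs.get ⟨k, hk⟩).1 ⊆ h (xs.get ⟨k, hk⟩).1}.Finite :=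
  (Set.finite_Iio xs.length).subset fun _ ⟨hk, _⟩ => hk

lemma numMistakes_le_length {X Y : Type} (A : List (X × Y) → X → Set Y)
    (h : X → Set Y) (xs : List (X × Y)) : numMistakes A h xs ≤ xs.length :=
  calc numMistakes A h xs ≤ (Set.Iio xs.length).ncard :=
        Set.ncard_le_ncard (fun _ ⟨hk, _⟩ => hk) (Set.finite_Iio _)
    _ = xs.length := by simp [Set.ncard_eq_toFinset_card']

lemma apMistakes_aap_le_numMistakes {X : Type} {A : List (X × Bool) → X → Set Bool}
    {h : X → Bool} {xs : List (X × Bool)} (hxs : AppleCompatible (aap A) h xs) :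
    apMistakes (aap A) h xs ≤ numMistakes A (ham h) xs := by
  refine Set.ncard_le_ncard ?_ (numMistakes_set_finite A (ham h) xs)
  rintro k ⟨hk, hne⟩
  exact ⟨hk, hxs ⟨k, hk⟩ ▸ aap_ne_imp_mistake A h _ _ hne⟩

/-- reduction from apple tasting to ambiguous online learning:
`PM^{A^ap}_h(N) ≤ M^A_{h^am}(N)`, i.e. the worst-case number of apple-tasting
mistakes of `A^ap` over length-`N` interactions consistent with `h` is at most the
worst-case number of ambiguous mistakes of `A` over length-`N` traces compatible
with `h^am`. -/
theorem apple_tasting_reduction {X : Type} (A : List (X × Bool) → X → Set Bool)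
    (h : X → Bool) (N : ℕ) :
    sSup {m : ℕ | ∃ xs : List (X × Bool), xs.length = N ∧
        AppleCompatible (aap A) h xs ∧ m = apMistakes (aap A) h xs} ≤
      sSup {m : ℕ | ∃ xs : List (X × Bool), xs.length = N ∧
        Compatible (ham h) xs ∧ m = numMistakes A (ham h) xs} := by
  have hbdd : BddAbove {m : ℕ | ∃ xs : List (X × Bool), xs.length = N ∧
      Compatible (ham h) xs ∧ m = numMistakes A (ham h) xs} :=
    ⟨N, fun _ ⟨ys, hlen, _, hm⟩ => hm ▸ hlen ▸ numMistakes_le_length A (ham h) ys⟩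
  refine csSup_le' ?_
  rintro _ ⟨xs, hlen, hxs, rfl⟩
  exact (apMistakes_aap_le_numMistakes hxs).trans
    (le_csSup hbdd ⟨xs, hlen, hxs.compatible_ham, rfl⟩)
end
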